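/- arXiv:1111.6110 — 5 statements merged into one kernel-verified Lean document; each statement's English description precedes it below -/
import Mathlib

section
/- For ν > 1, if X₊ has the Student t density truncated to (0,∞), i.e. density f⁺(x) = f(x|μ,ν)/P_{μ,ν}(X>0) for x > 0 and 0 otherwise, then E[X₊] = μ + C(ν)·(ν/(ν-1))·(1+μ²/ν)^{-(ν-1)/2} / P_{μ,ν}(X>0). -/
open MeasureTheory Real Set

noncomputable def C (ν : ℝ) : ℝ := Real.Gamma ((ν + 1) / 2) / (Real.Gamma (ν / 2) * Real.sqrt (π * ν))

section aux

open Filter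

variable (ν μ : ℝ)

noncomputable def Fa (x : ℝ) : ℝ := -(ν/(ν-1)) * (1 + (x - μ)^2 / ν) ^ (-(ν-1)/2)

noncomputable def ga (x : ℝ) : ℝ := (x - μ) * (1 + (x - μ)^2 / ν) ^ (-(ν+1)/2)

variable {ν}

lemma upos (hν : 1 < ν) (x : ℝ) : 0 < 1 + (x - μ)^2 / ν := by
  have : 0 ≤ (x - μ)^2 / ν := div_nonneg (sq_nonneg _) (by linarith)
  linarith

lemma hderivFa (hν : 1 < ν) (x : ℝ) : HasDerivAt (Fa ν μ) (ga ν μ x) x := by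
  have hν0 : (0:ℝ) < ν := by linarith
  have hu : HasDerivAt (fun x : ℝ => 1 + (x - μ)^2 / ν) (2*(x-μ)/ν) x := by
    have h1 : HasDerivAt (fun x : ℝ => x - μ) 1 x := (hasDerivAt_id x).sub_const μ
    have h2 := (h1.pow 2).div_const ν
    have h3 := h2.const_add 1
    refine h3.congr_deriv ?_
    norm_num
  have hupos := upos μ hν x
  have h4 := hu.rpow_const (p := -(ν-1)/2) (Or.inl hupos.ne')
  have h5 := h4.const_mul (-(ν/(ν-1)))
  refine h5.congr_deriv ?_
  unfold ga
  rw [show -(ν-1)/2 - 1 = -(ν+1)/2 by ring] at *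
  have hν1 : ν - 1 ≠ 0 := by linarith
  field_simp

lemma tendstoFa (hν : 1 < ν) : Tendsto (Fa ν μ) atTop (nhds 0) := by
  have hν0 : (0:ℝ) < ν := by linarith
  have h1 : Tendsto (fun x : ℝ => 1 + (x - μ)^2 / ν) atTop atTop := by
    apply tendsto_atTop_add_const_left
    apply Tendsto.atTop_div_const hν0
    exact (tendsto_pow_atTop (two_ne_zero)).comp (tendsto_atTop_add_const_right _ (-μ) tendsto_id)
  have h2 : Tendsto (fun x : ℝ => (1 + (x - μ)^2 / ν) ^ (-(ν-1)/2)) atTop (nhds 0) := by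
    have := (tendsto_rpow_neg_atTop (y := (ν-1)/2) (by linarith)).comp h1
    rw [show -(ν-1)/2 = -((ν-1)/2) by ring]
    exact this
  have := h2.const_mul (-(ν/(ν-1)))
  unfold Fa
  simpa only [mul_zero] using this

lemma contga (hν : 1 < ν) : Continuous (ga ν μ) := by
  apply Continuous.mul (by continuity)
  apply Continuous.rpow_const (by continuity)
  intro x
  exact Or.inl (upos μ hν x).ne'

lemma intga (hν : 1 < ν) : IntegrableOn (ga ν μ) (Ioi (0:ℝ)) := by
  set m := max 0 μ with hm
  have h1 : IntegrableOn (ga ν μ) (Ioc 0 m) := (contga μ hν).integrableOn_Ioc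
  have h2 : IntegrableOn (ga ν μ) (Ioi m) := by
    refine integrableOn_Ioi_deriv_of_nonneg (g := Fa ν μ)
      (hderivFa μ hν m).continuousAt.continuousWithinAt
      (fun x _ => hderivFa μ hν x) (fun x hx => ?_) (tendstoFa μ hν)
    have hx' : μ ≤ x := le_trans (le_max_right 0 μ) (le_of_lt hx)
    exact mul_nonneg (by linarith) (rpow_nonneg (upos μ hν x).le _)
  have := h1.union h2
  rwa [Ioc_union_Ioi_eq_Ioi (le_max_left 0 μ)] at this

lemma intga_val (hν : 1 < ν) :
    ∫ x in Ioi (0:ℝ), ga ν μ x = (ν/(ν-1)) * (1 + μ^2/ν) ^ (-(ν-1)/2) := by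
  have := integral_Ioi_of_hasDerivAt_of_tendsto (f := Fa ν μ) (f' := ga ν μ) (a := 0)
    (hderivFa μ hν 0).continuousAt.continuousWithinAt
    (fun x _ => hderivFa μ hν x) (intga μ hν) (tendstoFa μ hν)
  rw [this]
  simp only [Fa, zero_sub, neg_neg]
  ring_nf

end aux

theorem stmt_6 (ν μ : ℝ) (hν : 1 < ν)
    (P : ℝ) (hP : P = ∫ x in Ioi (0:ℝ), C ν * (1 + (x - μ)^2 / ν) ^ (-(ν + 1) / 2))
    (hPpos : 0 < P) :
    ∫ x in Ioi (0:ℝ), x * (C ν * (1 + (x - μ)^2 / ν) ^ (-(ν + 1) / 2) / P) =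
      μ + C ν * (ν / (ν - 1)) * (1 + μ^2 / ν) ^ (-(ν - 1) / 2) / P := by
  set f : ℝ → ℝ := fun x => C ν * (1 + (x - μ)^2 / ν) ^ (-(ν + 1) / 2) with hfdef
  have hfint : IntegrableOn f (Ioi (0:ℝ)) := by
    by_contra h
    rw [hP, integral_undef h] at hPpos
    exact lt_irrefl 0 hPpos
  have hgint : IntegrableOn (fun x => C ν * ga ν μ x) (Ioi (0:ℝ)) := (intga μ hν).const_mul _
  have key : ∀ x : ℝ, x * (f x / P) = (C ν * ga ν μ x + μ * f x) / P := by
    intro x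
    simp only [hfdef, ga]
    ring
  change ∫ x in Ioi (0:ℝ), x * (f x / P) = _
  simp_rw [key]
  rw [integral_div, integral_add hgint (hfint.const_mul μ), integral_const_mul,
    integral_const_mul, intga_val μ hν, ← hP]
  rw [add_div, mul_div_cancel_right₀ μ hPpos.ne']
  ring
end

section
/- For ν > 1 and μ ∈ ℝ, ∫_{-∞}^0 x·C(ν)·(1+(x−μ)²/ν)^{−(ν+1)/2} dx = μ·P_{μ,ν}(X<0) − C(ν)·(ν/(ν−1))·(1+μ²/ν)^{−(ν−1)/2}, where P_{μ,ν}(X<0) = ∫_{-∞}^0 C(ν)(1+(x−μ)²/ν)^{−(ν+1)/2} dx. -/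
open MeasureTheory Real Set

section Aux
open Filter Topology

-- key comparison bound
lemma base_bound (ν : ℝ) (hν : 0 < ν) (y : ℝ) :
    (1 + |y|)^2 ≤ (2 * max 1 ν) * (1 + y^2 / ν) := by
  have h1 : (1:ℝ) ≤ max 1 ν := le_max_left _ _
  have h2 : y^2 ≤ max 1 ν * (y^2 / ν) := by
    rw [mul_div_assoc']
    rw [le_div_iff₀ hν]
    nlinarith [le_max_right (1:ℝ) ν, sq_nonneg y]
  have h3 : 2 * |y| ≤ 1 + y^2 := by nlinarith [sq_abs y, sq_nonneg (|y| - 1)]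
  nlinarith [abs_nonneg y, sq_abs y]

lemma g_le (ν : ℝ) (hν : 0 < ν) {p : ℝ} (hp : 0 ≤ p) (y : ℝ) :
    (1 + y^2 / ν) ^ (-p) ≤ (2 * max 1 ν) ^ p * (1 + |y|) ^ (-(2*p)) := by
  have hb : (0:ℝ) < 1 + y^2 / ν := by positivity
  have hc : (0:ℝ) < 2 * max 1 ν := by positivity
  have ha : (0:ℝ) < 1 + |y| := by positivity
  have h1 : (1 + |y|)^2 / (2 * max 1 ν) ≤ 1 + y^2 / ν := by
    rw [div_le_iff₀ hc]; nlinarith [base_bound ν hν y]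
  have h2 : (1 + y^2 / ν) ^ (-p) ≤ ((1 + |y|)^2 / (2 * max 1 ν)) ^ (-p) :=
    Real.rpow_le_rpow_of_nonpos (by positivity) h1 (by linarith)
  refine h2.trans_eq ?_
  rw [Real.div_rpow (by positivity) hc.le, Real.rpow_neg hc.le, div_inv_eq_mul,
    mul_comm, ← Real.rpow_natCast (1 + |y|) 2, ← Real.rpow_mul ha.le]
  ring_nf

lemma integrable_aux {r : ℝ} (hr : 1 < r) (μ : ℝ) (K : ℝ) :
    Integrable (fun x : ℝ => K * (1 + |x - μ|) ^ (-r)) := by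
  have h : Integrable (fun x : ℝ => (1 + ‖x‖) ^ (-r)) := by
    apply integrable_one_add_norm (μ := volume)
    simp [hr]
  simpa [Real.norm_eq_abs] using ((h.comp_sub_right μ).const_mul K)

lemma meas_aux (ν : ℝ) (hν : 0 < ν) (μ p : ℝ) :
    AEStronglyMeasurable (fun x : ℝ => (1 + (x - μ)^2 / ν) ^ p) volume := by
  apply Continuous.aestronglyMeasurable
  apply Continuous.rpow_const (by continuity)
  intro x
  exact Or.inl (by positivity)

lemma g_integrable (ν μ : ℝ) (hν : 1 < ν) :
    Integrable (fun x : ℝ => (1 + (x - μ)^2 / ν) ^ (-(ν + 1) / 2)) := by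
  have hν0 : (0:ℝ) < ν := by linarith
  apply (integrable_aux (r := ν + 1) (by linarith) μ ((2 * max 1 ν) ^ ((ν+1)/2))).mono
    (meas_aux ν hν0 μ _)
  refine ae_of_all _ fun x => ?_
  have hb : (0:ℝ) < 1 + (x - μ)^2 / ν := by positivity
  have ha : (0:ℝ) < 1 + |x - μ| := by positivity
  have hK : (0:ℝ) < (2 * max 1 ν : ℝ) ^ ((ν+1)/2) := by positivity
  rw [Real.norm_eq_abs, Real.norm_eq_abs, abs_of_pos (Real.rpow_pos_of_pos hb _),
    abs_of_pos (by positivity)]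
  have := g_le ν hν0 (p := (ν+1)/2) (by linarith) (x - μ)
  calc (1 + (x - μ)^2 / ν) ^ (-(ν + 1) / 2)
      = (1 + (x - μ)^2 / ν) ^ (-((ν + 1) / 2)) := by ring_nf
    _ ≤ (2 * max 1 ν) ^ ((ν+1)/2) * (1 + |x - μ|) ^ (-(2 * ((ν+1)/2))) := this
    _ = (2 * max 1 ν) ^ ((ν+1)/2) * (1 + |x - μ|) ^ (-(ν+1)) := by
        rw [show (-(2 * ((ν+1)/2)) : ℝ) = -(ν+1) by ring]

lemma xg_integrable (ν μ : ℝ) (hν : 1 < ν) :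
    Integrable (fun x : ℝ => (x - μ) * (1 + (x - μ)^2 / ν) ^ (-(ν + 1) / 2)) := by
  have hν0 : (0:ℝ) < ν := by linarith
  apply (integrable_aux (r := ν) hν μ ((2 * max 1 ν) ^ ((ν+1)/2))).mono
  · exact (aestronglyMeasurable_id.sub aestronglyMeasurable_const).mul (meas_aux ν hν0 μ _)
  refine ae_of_all _ fun x => ?_
  have hb : (0:ℝ) < 1 + (x - μ)^2 / ν := by positivity
  have ha : (0:ℝ) < 1 + |x - μ| := by positivity
  have hK : (0:ℝ) < (2 * max 1 ν : ℝ) ^ ((ν+1)/2) := by positivity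
  rw [Real.norm_eq_abs, Real.norm_eq_abs,
    abs_of_pos (show (0:ℝ) < (2 * max 1 ν) ^ ((ν+1)/2) * (1 + |x - μ|) ^ (-ν) by positivity),
    abs_mul, abs_of_pos (Real.rpow_pos_of_pos hb _)]
  have h1 := g_le ν hν0 (p := (ν+1)/2) (by linarith) (x - μ)
  have h2 : |x - μ| ≤ 1 + |x - μ| := by linarith [abs_nonneg (x - μ)]
  calc |x - μ| * (1 + (x - μ)^2 / ν) ^ (-(ν + 1) / 2)
      ≤ (1 + |x - μ|) * ((2 * max 1 ν) ^ ((ν+1)/2) * (1 + |x - μ|) ^ (-(2 * ((ν+1)/2)))) := by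
        apply mul_le_mul h2 _ (Real.rpow_nonneg hb.le _) ha.le
        rw [show (-(ν + 1) / 2 : ℝ) = -((ν+1)/2) by ring]; exact h1
    _ = (2 * max 1 ν) ^ ((ν+1)/2) * (1 + |x - μ|) ^ (-ν) := by
        rw [show (-(2 * ((ν+1)/2)) : ℝ) = -(ν+1) by ring,
          show (-ν : ℝ) = 1 + -(ν+1) by ring, Real.rpow_add ha, Real.rpow_one]
        ring

lemma deriv_aux (ν μ : ℝ) (hν : 1 < ν) (x : ℝ) :
    HasDerivAt (fun x : ℝ => -(ν/(ν-1)) * (1 + (x - μ)^2 / ν) ^ (-(ν - 1) / 2))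
      ((x - μ) * (1 + (x - μ)^2 / ν) ^ (-(ν + 1) / 2)) x := by
  have hν0 : (0:ℝ) < ν := by linarith
  have hν1 : ν - 1 ≠ 0 := by linarith
  have hb : (0:ℝ) < 1 + (x - μ)^2 / ν := by positivity
  have hu : HasDerivAt (fun x : ℝ => 1 + (x - μ)^2 / ν) (2*(x-μ)/ν) x := by
    have h1 : HasDerivAt (fun x : ℝ => x - μ) 1 x := (hasDerivAt_id x).sub_const μ
    have h2 := ((h1.pow 2).div_const ν).const_add 1
    refine h2.congr_deriv ?_
    simp
  have h3 := (hu.rpow_const (p := -(ν - 1) / 2) (Or.inl hb.ne')).const_mul (-(ν/(ν-1)))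
  refine h3.congr_deriv ?_
  rw [show (-(ν - 1) / 2 - 1 : ℝ) = -(ν + 1) / 2 by ring]
  field_simp

lemma tendsto_aux (ν μ : ℝ) (hν : 1 < ν) :
    Tendsto (fun x : ℝ => -(ν/(ν-1)) * (1 + (x - μ)^2 / ν) ^ (-(ν - 1) / 2)) atBot (𝓝 0) := by
  have hν0 : (0:ℝ) < ν := by linarith
  have h1 : Tendsto (fun x : ℝ => 1 + (x - μ)^2 / ν) atBot atTop := by
    apply tendsto_atTop_add_const_left
    apply Tendsto.atTop_div_const hν0
    have hsub : Tendsto (fun x : ℝ => x - μ) atBot atBot := by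
      simpa [sub_eq_add_neg] using tendsto_atBot_add_const_right atBot (-μ) tendsto_id
    have habs : Tendsto (fun x : ℝ => |x - μ|) atBot atTop := tendsto_abs_atBot_atTop.comp hsub
    exact ((tendsto_pow_atTop two_ne_zero).comp habs).congr fun x => sq_abs _
  have h2 : Tendsto (fun x : ℝ => (1 + (x - μ)^2 / ν) ^ (-(ν - 1) / 2)) atBot (𝓝 0) := by
    have := (tendsto_rpow_neg_atTop (show (0:ℝ) < (ν-1)/2 by linarith)).comp h1
    exact this.congr fun x => by rw [Function.comp_apply, ← neg_div]
  simpa using h2.const_mul (-(ν/(ν-1)))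

end Aux

theorem stmt_11 (ν μ : ℝ) (hν : 1 < ν) :
    ∫ x in Iio (0:ℝ), x * (C ν * (1 + (x - μ)^2 / ν) ^ (-(ν + 1) / 2)) =
      μ * (∫ x in Iio (0:ℝ), C ν * (1 + (x - μ)^2 / ν) ^ (-(ν + 1) / 2)) -
        C ν * (ν / (ν - 1)) * (1 + μ^2 / ν) ^ (-(ν - 1) / 2) := by
  have hν0 : (0:ℝ) < ν := by linarith
  have hgi := g_integrable ν μ hν
  have hxgi := xg_integrable ν μ hν
  have key : ∫ x in Iio (0:ℝ), (x - μ) * (1 + (x - μ)^2 / ν) ^ (-(ν + 1) / 2)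
      = -(ν/(ν-1)) * (1 + μ^2/ν) ^ (-(ν-1)/2) := by
    rw [← integral_Iic_eq_integral_Iio]
    have := integral_Iic_of_hasDerivAt_of_tendsto' (a := (0:ℝ))
      (fun x _ => deriv_aux ν μ hν x) hxgi.integrableOn (tendsto_aux ν μ hν)
    simpa using this
  have split : ∫ x in Iio (0:ℝ), x * (C ν * (1 + (x - μ)^2 / ν) ^ (-(ν + 1) / 2))
      = C ν * (∫ x in Iio (0:ℝ), (x - μ) * (1 + (x - μ)^2 / ν) ^ (-(ν + 1) / 2))
        + μ * ∫ x in Iio (0:ℝ), C ν * (1 + (x - μ)^2 / ν) ^ (-(ν + 1) / 2) := by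
    calc ∫ x in Iio (0:ℝ), x * (C ν * (1 + (x - μ)^2 / ν) ^ (-(ν + 1) / 2))
        = ∫ x in Iio (0:ℝ), (C ν * ((x - μ) * (1 + (x - μ)^2 / ν) ^ (-(ν + 1) / 2))
            + μ * (C ν * (1 + (x - μ)^2 / ν) ^ (-(ν + 1) / 2))) :=
          integral_congr_ae (ae_of_all _ fun x => by ring)
      _ = (∫ x in Iio (0:ℝ), C ν * ((x - μ) * (1 + (x - μ)^2 / ν) ^ (-(ν + 1) / 2)))
            + ∫ x in Iio (0:ℝ), μ * (C ν * (1 + (x - μ)^2 / ν) ^ (-(ν + 1) / 2)) :=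
          integral_add ((hxgi.const_mul _).integrableOn) (((hgi.const_mul _).const_mul _).integrableOn)
      _ = _ := by rw [integral_const_mul, integral_const_mul]
  rw [split, key]
  ring
end

section
/- For ν > 1, the expectation E_{μ,ν}[|X|] as a function of μ satisfies E_{μ,ν}[|X|] − μ → 0 as μ → +∞; i.e., E_{μ,ν}[|X|] = μ(2P_{μ,ν}(X>0) − 1) + 2C(ν)(ν/(ν−1))(1+μ²/ν)^{−(ν−1)/2} tends to have the diagonal as asymptote. -/
open MeasureTheory Real Set Filter

lemma cont_p (ν : ℝ) (hν : 0 < ν) (r : ℝ) : Continuous fun x : ℝ => (1 + x^2/ν) ^ r := by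
  apply Continuous.rpow_const (by continuity)
  intro x; left; positivity

lemma int_aux (ν r : ℝ) (hν : 1 < ν) (hr : 1 < r) :
    Integrable fun x : ℝ => (1 + x^2/ν) ^ (-r/2) := by
  have hν0 : (0:ℝ) < ν := by linarith
  have h0 : Integrable fun x : ℝ => ((1:ℝ) + x^2) ^ (-r/2) := by
    have := integrable_rpow_neg_one_add_norm_sq (E := ℝ) (μ := volume) (r := r) (by simpa using hr)
    simpa [Real.norm_eq_abs, sq_abs] using this
  refine (h0.const_mul (ν ^ (r/2))).mono' (cont_p ν hν0 _).aestronglyMeasurable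
    (Eventually.of_forall fun x => ?_)
  have h1 : (0:ℝ) < 1 + x^2/ν := by positivity
  rw [Real.norm_eq_abs, abs_of_nonneg (Real.rpow_nonneg h1.le _)]
  have h2 : (1 + x^2)/ν ≤ 1 + x^2/ν := by
    rw [div_le_iff₀ hν0]
    have : x^2/ν*ν = x^2 := by field_simp
    nlinarith
  calc (1 + x^2/ν) ^ (-r/2) ≤ ((1 + x^2)/ν) ^ (-r/2) :=
        Real.rpow_le_rpow_of_nonpos (by positivity) h2 (by linarith)
    _ = ν ^ (r/2) * ((1:ℝ) + x^2) ^ (-r/2) := by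
        rw [Real.div_rpow (by positivity) hν0.le, neg_div, Real.rpow_neg hν0.le,
          div_eq_mul_inv, inv_inv, mul_comm]

lemma int_p (ν : ℝ) (hν : 1 < ν) :
    Integrable fun x : ℝ => (1 + x^2/ν) ^ (-(ν+1)/2) :=
  int_aux ν (ν+1) hν (by linarith)

lemma int_xp (ν : ℝ) (hν : 1 < ν) :
    Integrable fun x : ℝ => |x| * (1 + x^2/ν) ^ (-(ν+1)/2) := by
  have hν0 : (0:ℝ) < ν := by linarith
  have hcont : Continuous fun x : ℝ => |x| * (1 + x^2/ν) ^ (-(ν+1)/2) :=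
    continuous_abs.mul (cont_p ν hν0 _)
  refine ((int_aux ν ν hν hν).const_mul (Real.sqrt ν)).mono' hcont.aestronglyMeasurable
    (Eventually.of_forall fun x => ?_)
  have hb : (0:ℝ) < 1 + x^2/ν := by positivity
  rw [Real.norm_eq_abs, abs_of_nonneg (mul_nonneg (abs_nonneg _) (Real.rpow_nonneg hb.le _))]
  have h1 : |x| ≤ Real.sqrt ν * (1 + x^2/ν) ^ ((1:ℝ)/2) := by
    rw [← Real.sqrt_sq_eq_abs, ← Real.sqrt_eq_rpow, ← Real.sqrt_mul hν0.le]
    apply Real.sqrt_le_sqrt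
    have : ν * (x^2/ν) = x^2 := by field_simp
    nlinarith
  calc |x| * (1 + x^2/ν) ^ (-(ν+1)/2)
      ≤ (Real.sqrt ν * (1 + x^2/ν) ^ ((1:ℝ)/2)) * (1 + x^2/ν) ^ (-(ν+1)/2) :=
        mul_le_mul_of_nonneg_right h1 (Real.rpow_nonneg hb.le _)
    _ = Real.sqrt ν * (1 + x^2/ν) ^ (-ν/2) := by
        rw [mul_assoc, ← Real.rpow_add hb, show (1:ℝ)/2 + -(ν+1)/2 = -ν/2 by ring]
lemma norm_p (ν : ℝ) (hν : 1 < ν) :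
    ∫ x : ℝ, (1 + x^2/ν) ^ (-(ν+1)/2)
      = Real.sqrt (π*ν) * Real.Gamma (ν/2) / Real.Gamma ((ν+1)/2) := by
  have hν0 : (0:ℝ) < ν := by linarith
  set s : ℝ := (ν+1)/2 with hs_def
  have hexp : -(ν+1)/2 = -s := by rw [hs_def]; ring
  have hs : 0 < s := by rw [hs_def]; linarith
  have hG : 0 < Real.Gamma s := Real.Gamma_pos_of_pos hs
  set f : ℝ → ℝ → ℝ := fun x t => (t ^ (s-1) * Real.exp (-t)) * Real.exp (-(t/ν) * x^2)
    with hf_def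
  have hb : ∀ x : ℝ, (0:ℝ) < 1 + x^2/ν := fun x => by positivity
  have hsplit : ∀ x t : ℝ, f x t = t ^ (s-1) * Real.exp (-((1 + x^2/ν) * t)) := by
    intro x t
    rw [hf_def]; dsimp only
    rw [mul_assoc, ← Real.exp_add]
    congr 1
    field_simp
    ring
  have key : ∀ x : ℝ, ∫ t in Ioi (0:ℝ), f x t = Real.Gamma s * (1 + x^2/ν) ^ (-s) := by
    intro x
    rw [setIntegral_congr_fun measurableSet_Ioi (fun t _ => hsplit x t),
      integral_rpow_mul_exp_neg_mul_Ioi hs (hb x),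
      one_div, Real.inv_rpow (hb x).le, ← Real.rpow_neg (hb x).le, mul_comm]
  have hmeas : AEStronglyMeasurable (Function.uncurry f)
      ((volume : Measure ℝ).prod (volume.restrict (Ioi 0))) := by
    apply Measurable.aestronglyMeasurable
    simp only [hf_def, Function.uncurry]
    fun_prop
  have hIone : ∀ x : ℝ, IntegrableOn (fun t => f x t) (Ioi (0:ℝ)) := by
    intro x
    have base := integrableOn_rpow_mul_exp_neg_mul_rpow (s := s-1) (p := 1)
      (b := 1 + x^2/ν) (by linarith) one_pos (hb x)
    refine base.congr_fun (fun t _ => ?_) measurableSet_Ioi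
    dsimp only
    rw [Real.rpow_one, hsplit x t, neg_mul]
  have hnormint : ∀ x : ℝ, (∫ t in Ioi (0:ℝ), ‖f x t‖)
      = Real.Gamma s * (1 + x^2/ν) ^ (-s) := by
    intro x
    rw [← key x]
    refine setIntegral_congr_fun measurableSet_Ioi (fun t ht => ?_)
    rw [Real.norm_eq_abs, abs_of_nonneg]
    exact mul_nonneg (mul_nonneg (Real.rpow_nonneg (le_of_lt ht) _) (Real.exp_pos _).le)
      (Real.exp_pos _).le
  have hint : Integrable (Function.uncurry f)
      ((volume : Measure ℝ).prod (volume.restrict (Ioi 0))) := by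
    rw [MeasureTheory.integrable_prod_iff hmeas]
    constructor
    · exact Eventually.of_forall hIone
    · have h2 : Integrable (fun x : ℝ => Real.Gamma s * (1 + x^2/ν) ^ (-s)) := by
        have := (int_aux ν (ν+1) hν (by linarith)).const_mul (Real.Gamma s)
        refine this.congr (Eventually.of_forall fun x => ?_)
        rw [hexp]
      exact h2.congr (Eventually.of_forall fun x => (hnormint x).symm)
  have swap := MeasureTheory.integral_integral_swap hint
  have lhs : (∫ x : ℝ, ∫ t in Ioi (0:ℝ), f x t)
      = Real.Gamma s * ∫ x : ℝ, (1 + x^2/ν) ^ (-s) := by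
    simp_rw [key]
    rw [MeasureTheory.integral_const_mul]
  have rhs : (∫ t in Ioi (0:ℝ), ∫ x : ℝ, f x t)
      = Real.sqrt (π*ν) * Real.Gamma (ν/2) := by
    have h1 : ∀ t ∈ Ioi (0:ℝ), (∫ x : ℝ, f x t)
        = Real.sqrt (π*ν) * (Real.exp (-t) * t ^ (ν/2 - 1)) := by
      intro t ht
      have ht0 : (0:ℝ) < t := ht
      rw [hf_def]; dsimp only
      rw [MeasureTheory.integral_const_mul, integral_gaussian (t/ν)]
      have e1 : π / (t/ν) = π*ν/t := by field_simp
      have e2 : Real.sqrt (π*ν/t) = Real.sqrt (π*ν) * t ^ ((-(1/2)):ℝ) := by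
        rw [Real.sqrt_div (by positivity) t, Real.sqrt_eq_rpow t, div_eq_mul_inv,
          ← Real.rpow_neg ht0.le]
      rw [e1, e2]
      calc t ^ (s-1) * Real.exp (-t) * (Real.sqrt (π*ν) * t ^ ((-(1/2)):ℝ))
          = Real.sqrt (π*ν) * (Real.exp (-t) * (t ^ (s-1) * t ^ ((-(1/2)):ℝ))) := by ring
        _ = Real.sqrt (π*ν) * (Real.exp (-t) * t ^ (ν/2 - 1)) := by
            rw [← Real.rpow_add ht0, show s - 1 + (-(1/2) : ℝ) = ν/2 - 1 from by
              rw [hs_def]; ring]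
    rw [setIntegral_congr_fun measurableSet_Ioi h1, MeasureTheory.integral_const_mul]
    congr 1
    exact (Real.Gamma_eq_integral (by linarith : (0:ℝ) < ν/2)).symm
  have hswap2 : Real.Gamma s * ∫ x : ℝ, (1 + x^2/ν) ^ (-s)
      = Real.sqrt (π*ν) * Real.Gamma (ν/2) := by
    rw [← lhs, swap, rhs]
  have hre : (∫ x : ℝ, (1 + x^2/ν) ^ (-(ν+1)/2)) = ∫ x : ℝ, (1 + x^2/ν) ^ (-s) := by
    simp_rw [hexp]
  rw [hre, eq_div_iff hG.ne']
  linear_combination hswap2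
lemma int_idp (ν : ℝ) (hν : 1 < ν) :
    Integrable fun x : ℝ => x * (1 + x^2/ν) ^ (-(ν+1)/2) := by
  have hν0 : (0:ℝ) < ν := by linarith
  refine (int_xp ν hν).mono' ((continuous_id.mul (cont_p ν hν0 _)).aestronglyMeasurable)
    (Eventually.of_forall fun x => ?_)
  have hb : (0:ℝ) < 1 + x^2/ν := by positivity
  rw [Real.norm_eq_abs, abs_mul, abs_of_nonneg (Real.rpow_nonneg hb.le _)]

lemma mean_zero (ν : ℝ) (hν : 1 < ν) :
    ∫ x : ℝ, x * (1 + x^2/ν) ^ (-(ν+1)/2) = 0 := by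
  have h : (∫ x : ℝ, -x * (1 + (-x)^2/ν) ^ (-(ν+1)/2))
      = ∫ x : ℝ, x * (1 + x^2/ν) ^ (-(ν+1)/2) :=
    MeasureTheory.integral_neg_eq_self (fun x : ℝ => x * (1 + x^2/ν) ^ (-(ν+1)/2)) volume
  have e : (fun x : ℝ => -x * (1 + (-x)^2/ν) ^ (-(ν+1)/2))
      = fun x : ℝ => -(x * (1 + x^2/ν) ^ (-(ν+1)/2)) := by
    funext x; rw [neg_sq]; ring
  rw [e, MeasureTheory.integral_neg] at h
  linarith

theorem stmt_14 (ν : ℝ) (hν : 1 < ν) :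
    Filter.Tendsto
      (fun μ : ℝ => (∫ x : ℝ, |x| * (C ν * (1 + (x - μ)^2 / ν) ^ (-(ν + 1) / 2))) - μ)
      Filter.atTop (nhds 0) := by
  have hν0 : (0:ℝ) < ν := by linarith
  set p : ℝ → ℝ := fun x => (1 + x^2/ν) ^ (-(ν+1)/2) with hp_def
  have hπν : (0:ℝ) < Real.sqrt (π * ν) := Real.sqrt_pos.mpr (by positivity)
  have hG1 : 0 < Real.Gamma ((ν+1)/2) := Real.Gamma_pos_of_pos (by linarith)
  have hG2 : 0 < Real.Gamma (ν/2) := Real.Gamma_pos_of_pos (by linarith)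
  have hC : 0 < C ν := div_pos hG1 (mul_pos hG2 hπν)
  have hpc : Continuous p := cont_p ν hν0 _
  have hpn : ∀ x, 0 ≤ p x := fun x => Real.rpow_nonneg (by positivity) _
  have hnorm : ∫ x : ℝ, C ν * p x = 1 := by
    rw [hp_def, MeasureTheory.integral_const_mul, norm_p ν hν]
    rw [C]
    field_simp
  have hmean : ∫ x : ℝ, x * (C ν * p x) = 0 := by
    have : ∀ x : ℝ, x * (C ν * p x) = C ν * (x * p x) := fun x => by ring
    simp_rw [this]
    rw [MeasureTheory.integral_const_mul, hp_def, mean_zero ν hν, mul_zero]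
  -- change of variables
  have hshift : ∀ μ : ℝ, (∫ x : ℝ, |x| * (C ν * (1 + (x - μ)^2 / ν) ^ (-(ν + 1) / 2)))
      = ∫ y : ℝ, |y + μ| * (C ν * p y) := by
    intro μ
    rw [← MeasureTheory.integral_add_right_eq_self
      (μ := (volume : Measure ℝ))
      (fun x : ℝ => |x| * (C ν * (1 + (x - μ)^2 / ν) ^ (-(ν + 1) / 2))) μ]
    congr 1
    funext y
    simp only [hp_def, add_sub_cancel_right]
  -- integrabilities
  have hint1 : Integrable fun y : ℝ => |y| * (C ν * p y) := by
    have := (int_xp ν hν).const_mul (C ν)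
    refine this.congr (Eventually.of_forall fun y => ?_)
    rw [hp_def]; ring
  have hint0 : Integrable fun y : ℝ => C ν * p y := (int_p ν hν).const_mul (C ν)
  have hint2 : ∀ μ : ℝ, Integrable fun y : ℝ => |y + μ| * (C ν * p y) := by
    intro μ
    refine (hint1.add (hint0.const_mul |μ|)).mono'
      ((continuous_abs.comp (continuous_id.add continuous_const)).mul
        (continuous_const.mul hpc)).aestronglyMeasurable
      (Eventually.of_forall fun y => ?_)
    have h0 : 0 ≤ C ν * p y := mul_nonneg hC.le (hpn y)
    rw [Real.norm_eq_abs, abs_of_nonneg (mul_nonneg (abs_nonneg _) h0)]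
    have : |y + μ| ≤ |y| + |μ| := abs_add_le y μ
    calc |y + μ| * (C ν * p y) ≤ (|y| + |μ|) * (C ν * p y) :=
          mul_le_mul_of_nonneg_right this h0
      _ = |y| * (C ν * p y) + |μ| * (C ν * p y) := by ring
  have hint3 : ∀ μ : ℝ, Integrable fun y : ℝ => (y + μ) * (C ν * p y) := by
    intro μ
    have := (int_idp ν hν).const_mul (C ν)
    have h1 : Integrable fun y : ℝ => y * (C ν * p y) := by
      refine this.congr (Eventually.of_forall fun y => ?_)
      rw [hp_def]; ring
    refine (h1.add (hint0.const_mul μ)).congr (Eventually.of_forall fun y => ?_)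
    simp only [Pi.add_apply]
    ring
  -- decomposition
  have hdecomp : ∀ μ : ℝ, (∫ y : ℝ, |y + μ| * (C ν * p y)) - μ
      = ∫ y : ℝ, (|y + μ| - (y + μ)) * (C ν * p y) := by
    intro μ
    have e1 : ∫ y : ℝ, (|y + μ| - (y + μ)) * (C ν * p y)
        = (∫ y : ℝ, |y + μ| * (C ν * p y)) - ∫ y : ℝ, (y + μ) * (C ν * p y) := by
      rw [← MeasureTheory.integral_sub (hint2 μ) (hint3 μ)]
      congr 1; funext y; ring
    have e2 : ∫ y : ℝ, (y + μ) * (C ν * p y) = μ := by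
      have : ∀ y : ℝ, (y + μ) * (C ν * p y) = y * (C ν * p y) + μ * (C ν * p y) :=
        fun y => by ring
      simp_rw [this]
      rw [MeasureTheory.integral_add, hmean, MeasureTheory.integral_const_mul, hnorm]
      · ring
      · have := (int_idp ν hν).const_mul (C ν)
        refine this.congr (Eventually.of_forall fun y => ?_)
        rw [hp_def]; ring
      · exact hint0.const_mul μ
    rw [e1, e2]
  simp_rw [hshift, hdecomp]
  -- dominated convergence
  have := MeasureTheory.tendsto_integral_filter_of_dominated_convergence
    (μ := (volume : Measure ℝ)) (l := Filter.atTop)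
    (F := fun μ (y : ℝ) => (|y + μ| - (y + μ)) * (C ν * p y)) (f := fun _ => (0:ℝ))
    (bound := fun y => 2 * |y| * (C ν * p y))
    (Eventually.of_forall fun μ =>
      (((continuous_abs.comp (continuous_id.add continuous_const)).sub
        (continuous_id.add continuous_const)).mul
        (continuous_const.mul hpc)).aestronglyMeasurable)
    ?_ ?_ ?_
  · simpa using this
  · filter_upwards [Filter.eventually_ge_atTop (0:ℝ)] with μ hμ
    refine Eventually.of_forall fun y => ?_
    have h0 : 0 ≤ C ν * p y := mul_nonneg hC.le (hpn y)
    have h1 : 0 ≤ |y + μ| - (y + μ) := by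
      have := le_abs_self (y + μ); linarith
    rw [Real.norm_eq_abs, abs_of_nonneg (mul_nonneg h1 h0)]
    have h2 : |y + μ| - (y + μ) ≤ 2 * |y| := by
      rcases le_or_gt 0 (y + μ) with h | h
      · rw [abs_of_nonneg h]; have := abs_nonneg y; linarith
      · rw [abs_of_neg h]; have := neg_abs_le y; linarith
    exact mul_le_mul_of_nonneg_right h2 h0
  · refine (hint1.const_mul 2).congr (Eventually.of_forall fun y => ?_)
    ring
  · refine Eventually.of_forall fun y => ?_
    refine tendsto_const_nhds.congr' ?_
    filter_upwards [Filter.eventually_ge_atTop (-y)] with μ hμ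
    have h0 : 0 ≤ y + μ := by linarith
    rw [abs_of_nonneg h0]
    ring
end

section
/- For ν > 1 and μ ∈ ℝ, E_{μ,ν}[|X|] ≥ |E_{μ,ν}[X]| = |μ|, with strict inequality: μ(2P_{μ,ν}(X>0)−1) + 2C(ν)(ν/(ν−1))(1+μ²/ν)^{−(ν−1)/2} > |μ|. -/
open MeasureTheory Real Set
open Filter Topology


lemma beta_real {u v : ℝ} (hu : 0 < u) (hv : 0 < v) :
    ∫ x in (0:ℝ)..1, x ^ (u-1) * (1-x) ^ (v-1)
      = Real.Gamma u * Real.Gamma v / Real.Gamma (u+v) := by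
  have key := Complex.Gamma_mul_Gamma_eq_betaIntegral (s := (u:ℂ)) (t := (v:ℂ))
    (by simpa using hu) (by simpa using hv)
  have hcast : Complex.betaIntegral (u:ℂ) (v:ℂ)
      = ((∫ x in (0:ℝ)..1, x ^ (u-1) * (1-x) ^ (v-1) : ℝ) : ℂ) := by
    rw [Complex.betaIntegral, ← intervalIntegral.integral_ofReal]
    refine intervalIntegral.integral_congr (fun x hx => ?_)
    rw [uIcc_of_le (by norm_num)] at hx
    rw [Complex.ofReal_mul, Complex.ofReal_cpow hx.1, Complex.ofReal_cpow (by linarith [hx.2] : (0:ℝ) ≤ 1 - x)]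
    push_cast
    ring
  rw [hcast, ← Complex.ofReal_add, Complex.Gamma_ofReal, Complex.Gamma_ofReal,
    Complex.Gamma_ofReal, ← Complex.ofReal_mul, ← Complex.ofReal_mul] at key
  have := Complex.ofReal_injective key
  have hG : Real.Gamma (u+v) ≠ 0 := (Real.Gamma_pos_of_pos (by linarith)).ne'
  field_simp
  linarith [this]

lemma sub1 {s : ℝ} : ∫ x in Ioi (0:ℝ), (1 + x^2) ^ (-s)
    = ∫ x in Ioi (0:ℝ), (2:ℝ)⁻¹ * x ^ (-(2:ℝ)⁻¹) * (1 + x) ^ (-s) := by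
  rw [← MeasureTheory.integral_comp_rpow_Ioi (fun y => (1+y^2)^(-s))
    (p := (2:ℝ)⁻¹) (by norm_num)]
  refine setIntegral_congr_fun measurableSet_Ioi (fun x hx => ?_)
  have hx0 : (0:ℝ) < x := hx
  rw [smul_eq_mul, ← Real.rpow_natCast (x ^ ((2:ℝ)⁻¹)) 2, ← Real.rpow_mul hx0.le]
  norm_num

lemma sub2 {s : ℝ} : ∫ x in Ioi (0:ℝ), (2:ℝ)⁻¹ * x ^ (-(2:ℝ)⁻¹) * (1 + x) ^ (-s)
    = ∫ y in Ioo (0:ℝ) 1, |((1-y)^2)⁻¹| •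
        ((2:ℝ)⁻¹ * (y/(1-y)) ^ (-(2:ℝ)⁻¹) * (1 + y/(1-y)) ^ (-s)) := by
  have himg : (fun y : ℝ => y / (1 - y)) '' Ioo 0 1 = Ioi 0 := by
    ext x
    simp only [mem_image, mem_Ioo, mem_Ioi]
    constructor
    · rintro ⟨y, ⟨h1, h2⟩, rfl⟩
      have : (0:ℝ) < 1 - y := by linarith
      positivity
    · intro hx
      refine ⟨x / (1 + x), ⟨by positivity, by rw [div_lt_one (by linarith)]; linarith⟩, ?_⟩
      field_simp
      ring
  have hderiv : ∀ y ∈ Ioo (0:ℝ) 1, HasDerivWithinAt (fun y : ℝ => y / (1 - y))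
      (((1-y)^2)⁻¹) (Ioo 0 1) y := by
    intro y hy
    have h2 : (1:ℝ) - y ≠ 0 := by have := hy.2; intro h; linarith [(by linarith : y = 1)]
    have := (hasDerivAt_id y).div ((hasDerivAt_id y).const_sub 1) h2
    refine this.hasDerivWithinAt.congr_deriv ?_
    simp only [id]
    ring
  have hinj : InjOn (fun y : ℝ => y / (1 - y)) (Ioo 0 1) := by
    intro a ha b hb hab
    have ha2 : (1:ℝ) - a ≠ 0 := by have := ha.2; intro h; linarith [(by linarith : a = 1)]
    have hb2 : (1:ℝ) - b ≠ 0 := by have := hb.2; intro h; linarith [(by linarith : b = 1)]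
    field_simp at hab
    linarith
  have := integral_image_eq_integral_abs_deriv_smul measurableSet_Ioo hderiv hinj
    (fun x => (2:ℝ)⁻¹ * x ^ (-(2:ℝ)⁻¹) * (1 + x) ^ (-s))
  rw [himg] at this
  exact this

lemma sub3 {s : ℝ} : ∫ y in Ioo (0:ℝ) 1, |((1-y)^2)⁻¹| •
      ((2:ℝ)⁻¹ * (y/(1-y)) ^ (-(2:ℝ)⁻¹) * (1 + y/(1-y)) ^ (-s))
    = (2:ℝ)⁻¹ * ∫ y in (0:ℝ)..1, y ^ ((1:ℝ)/2 - 1) * (1-y) ^ ((s - 1/2) - 1) := by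
  rw [intervalIntegral.integral_of_le (by norm_num : (0:ℝ) ≤ 1),
    ← MeasureTheory.integral_const_mul, MeasureTheory.integral_Ioc_eq_integral_Ioo]
  refine setIntegral_congr_fun measurableSet_Ioo (fun y hy => ?_)
  have hy0 : (0:ℝ) < y := hy.1
  have hy1 : (0:ℝ) < 1 - y := by linarith [hy.2]
  have e1 : (1 + y/(1-y)) = (1-y)⁻¹ := by field_simp; ring
  have h1 : |((1 - y) ^ 2)⁻¹| = (1-y) ^ (-(2:ℝ)) := by
    rw [abs_of_pos (by positivity), ← Real.rpow_natCast (1-y) 2, ← Real.rpow_neg hy1.le]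
    norm_num
  have h2 : (y/(1-y)) ^ (-(2:ℝ)⁻¹) = y ^ (-(2:ℝ)⁻¹) * (1-y) ^ ((2:ℝ)⁻¹) := by
    rw [Real.div_rpow hy0.le hy1.le, div_eq_mul_inv, ← Real.rpow_neg hy1.le, neg_neg]
  have h3 : (1 + y/(1-y)) ^ (-s) = (1-y) ^ s := by
    rw [e1, Real.inv_rpow hy1.le, ← Real.rpow_neg hy1.le, neg_neg]
  have hy' : y ^ (-(2:ℝ)⁻¹) = y ^ ((1:ℝ)/2 - 1) := by norm_num
  have hcomb : (1-y)^(-(2:ℝ)) * ((1-y)^((2:ℝ)⁻¹) * (1-y)^s) = (1-y)^(s-1/2-1) := by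
    rw [← Real.rpow_add hy1, ← Real.rpow_add hy1]
    congr 1
    ring
  rw [smul_eq_mul, h1, h2, h3, hy']
  linear_combination (2⁻¹ * y ^ ((1:ℝ)/2 - 1)) * hcomb

lemma norm_line {s : ℝ} (hs : 1/2 < s) :
    ∫ x : ℝ, (1 + x^2) ^ (-s)
      = Real.sqrt π * Real.Gamma (s - 1/2) / Real.Gamma s := by
  have heven : ∫ x : ℝ, (1 + x^2) ^ (-s)
      = 2 * ∫ x in Ioi (0:ℝ), (1 + x^2) ^ (-s) := by
    rw [← integral_comp_abs (f := fun t => (1 + t^2) ^ (-s))]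
    simp [sq_abs]
  have hb := beta_real (u := 1/2) (v := s - 1/2) (by norm_num) (by linarith)
  rw [heven, sub1, sub2, sub3, hb, show (1:ℝ)/2 + (s - 1/2) = s by ring,
    Real.Gamma_one_half_eq]
  ring

lemma norm_nu {ν s : ℝ} (hν : 0 < ν) (hs : 1/2 < s) :
    ∫ x : ℝ, (1 + x^2/ν) ^ (-s)
      = Real.sqrt ν * (Real.sqrt π * Real.Gamma (s - 1/2) / Real.Gamma s) := by
  have hsq : (0:ℝ) < Real.sqrt ν := Real.sqrt_pos.mpr hν
  have key : ∀ x : ℝ, (1 + x^2/ν) ^ (-s) = (fun y : ℝ => (1 + y^2) ^ (-s)) (x / Real.sqrt ν) := by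
    intro x
    simp only [div_pow]
    rw [Real.sq_sqrt hν.le]
  simp_rw [key]
  rw [MeasureTheory.Measure.integral_comp_div (fun y : ℝ => (1 + y^2) ^ (-s)) (Real.sqrt ν),
    norm_line hs, abs_of_pos hsq, smul_eq_mul]

lemma hlow {ν : ℝ} (hν : 0 < ν) (x : ℝ) :
    min 1 ν⁻¹ / 2 * (1 + |x|)^2 ≤ 1 + x^2/ν := by
  have h1 : (1 + |x|)^2 ≤ 2 * (1 + x^2) := by
    have := sq_abs x
    nlinarith [sq_nonneg (1 - |x|), abs_nonneg x]
  have h2 : min 1 ν⁻¹ * (1 + x^2) ≤ 1 + x^2/ν := by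
    have ha : min 1 ν⁻¹ ≤ 1 := min_le_left _ _
    have hb : min 1 ν⁻¹ ≤ ν⁻¹ := min_le_right _ _
    have hc : (0:ℝ) < min 1 ν⁻¹ := lt_min one_pos (by positivity)
    have : min 1 ν⁻¹ * x^2 ≤ x^2/ν := by
      rw [div_eq_inv_mul]
      nlinarith [sq_nonneg x]
    nlinarith
  nlinarith [sq_nonneg (1 + |x|), (lt_min one_pos (inv_pos.mpr hν) : (0:ℝ) < min 1 ν⁻¹)]

lemma bound_main {ν s : ℝ} (hν : 0 < ν) (hs : 0 < s) (x : ℝ) :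
    (1 + x^2/ν) ^ (-s) ≤ (min 1 ν⁻¹ / 2) ^ (-s) * (1 + |x|) ^ (-(2*s)) := by
  have hc : (0:ℝ) < min 1 ν⁻¹ / 2 := by
    have := lt_min one_pos (inv_pos.mpr hν); positivity
  have hx1 : (0:ℝ) < 1 + |x| := by positivity
  have key : (min 1 ν⁻¹ / 2 * (1 + |x|)^2) ^ (-s) = (min 1 ν⁻¹ / 2) ^ (-s) * (1 + |x|) ^ (-(2*s)) := by
    rw [Real.mul_rpow hc.le (by positivity), ← Real.rpow_natCast (1+|x|) 2,
      ← Real.rpow_mul hx1.le]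
    norm_num
  rw [← key]
  exact Real.rpow_le_rpow_of_nonpos (by positivity) (hlow hν x) (by linarith)

lemma integ_main {ν s : ℝ} (hν : 0 < ν) (hs : 1/2 < s) :
    Integrable (fun x : ℝ => (1 + x^2/ν) ^ (-s)) := by
  have hint : Integrable (fun x : ℝ => (min 1 ν⁻¹ / 2) ^ (-s) * (1 + ‖x‖) ^ (-(2*s))) :=
    (integrable_one_add_norm (E := ℝ) (by simp; linarith)).const_mul _
  refine hint.mono' ?_ (ae_of_all _ fun x => ?_)
  · apply Continuous.aestronglyMeasurable
    apply Continuous.rpow_const (by continuity)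
    intro x; left; positivity
  · rw [Real.norm_eq_abs, abs_of_nonneg (Real.rpow_nonneg (by positivity) _)]
    simpa using bound_main hν (by linarith) x

lemma integ_lin {ν s : ℝ} (hν : 0 < ν) (hs : 1 < s) :
    Integrable (fun x : ℝ => x * (1 + x^2/ν) ^ (-s)) := by
  have hint : Integrable (fun x : ℝ => (min 1 ν⁻¹ / 2) ^ (-s) * (1 + ‖x‖) ^ (-(2*s - 1))) :=
    (integrable_one_add_norm (E := ℝ) (by simp; linarith)).const_mul _
  refine hint.mono' ?_ (ae_of_all _ fun x => ?_)
  · apply Continuous.aestronglyMeasurable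
    apply Continuous.mul continuous_id
    apply Continuous.rpow_const (by continuity)
    intro x; left; positivity
  · rw [Real.norm_eq_abs, abs_mul, abs_of_nonneg (Real.rpow_nonneg (by positivity) _)]
    have h1 : |x| * (1 + x^2/ν) ^ (-s) ≤ (1+|x|) * ((min 1 ν⁻¹ / 2) ^ (-s) * (1 + |x|) ^ (-(2*s))) := by
      have := bound_main hν (by linarith) x
      have habs : (0:ℝ) ≤ (1 + x^2/ν) ^ (-s) := Real.rpow_nonneg (by positivity) _
      nlinarith [abs_nonneg x, Real.rpow_nonneg (by positivity : (0:ℝ) ≤ min 1 ν⁻¹/2) (-s),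
        Real.rpow_nonneg (by positivity : (0:ℝ) ≤ 1 + |x|) (-(2*s))]
    refine h1.trans (le_of_eq ?_)
    have hx1 : (0:ℝ) < 1 + |x| := by positivity
    rw [Real.norm_eq_abs]
    rw [show -(2*s - 1) = -(2*s) + 1 by ring, Real.rpow_add hx1, Real.rpow_one]
    ring

lemma integ_main' {ν s a : ℝ} (hν : 0 < ν) (hs : 1/2 < s) :
    Integrable (fun x : ℝ => (1 + (x-a)^2/ν) ^ (-s)) :=
  (integ_main hν hs).comp_sub_right a

lemma integ_lin' {ν s a : ℝ} (hν : 0 < ν) (hs : 1 < s) :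
    Integrable (fun x : ℝ => (x-a) * (1 + (x-a)^2/ν) ^ (-s)) :=
  (integ_lin hν hs).comp_sub_right a

lemma T_eq {ν : ℝ} (hν : 1 < ν) (a : ℝ) :
    ∫ x in Ioi (0:ℝ), 2*(x-a)*(1 + (x-a)^2/ν) ^ (-(ν+1)/2)
      = 2*(ν/(ν-1))*(1 + a^2/ν) ^ (-(ν-1)/2) := by
  have hν0 : (0:ℝ) < ν := by linarith
  set F : ℝ → ℝ := fun x => -(2*(ν/(ν-1))) * (1 + (x-a)^2/ν) ^ (-(ν-1)/2) with hF
  have hbase : ∀ x : ℝ, (0:ℝ) < 1 + (x-a)^2/ν := fun x => by positivity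
  have hder : ∀ x : ℝ, HasDerivAt F (2*(x-a)*(1 + (x-a)^2/ν) ^ (-(ν+1)/2)) x := by
    intro x
    have hu : HasDerivAt (fun x : ℝ => 1 + (x-a)^2/ν) (2*(x-a)/ν) x := by
      have h1 : HasDerivAt (fun x : ℝ => x - a) 1 x := (hasDerivAt_id x).sub_const a
      have := ((h1.pow 2).div_const ν).const_add 1
      refine this.congr_deriv ?_
      ring
    have hrp := hu.rpow_const (p := -(ν-1)/2) (Or.inl (hbase x).ne')
    have := hrp.const_mul (-(2*(ν/(ν-1))))
    refine this.congr_deriv ?_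
    rw [show -(ν-1)/2 - 1 = -(ν+1)/2 by ring]
    generalize (1 + (x - a) ^ 2 / ν) ^ (-(ν+1)/2) = B
    have h1 : ν ≠ 0 := by linarith
    have h2 : ν - 1 ≠ 0 := by linarith
    field_simp
  have htend : Tendsto F atTop (𝓝 0) := by
    have h1 : Tendsto (fun x : ℝ => 1 + (x-a)^2/ν) atTop atTop := by
      apply tendsto_atTop_add_const_left
      apply Tendsto.atTop_div_const hν0
      exact (tendsto_pow_atTop (by norm_num)).comp (tendsto_atTop_add_const_right _ (-a) tendsto_id)
    have h2 : Tendsto (fun y : ℝ => y ^ (-((ν-1)/2))) atTop (𝓝 0) :=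
      tendsto_rpow_neg_atTop (by linarith)
    have h3 := (h2.comp h1).const_mul (-(2*(ν/(ν-1))))
    rw [mul_zero] at h3
    refine h3.congr fun x => ?_
    simp only [Function.comp, hF]
    rw [show (-((ν-1)/2) : ℝ) = -(ν-1)/2 by ring]
  have hint : IntegrableOn (fun x : ℝ => 2*(x-a)*(1 + (x-a)^2/ν) ^ (-(ν+1)/2)) (Ioi 0) := by
    have h := ((integ_lin' (a := a) hν0 (by linarith : 1 < (ν+1)/2)).const_mul 2).integrableOn
      (s := Ioi 0)
    refine h.congr_fun (fun x _ => ?_) measurableSet_Ioi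
    rw [show (-(ν+1)/2 : ℝ) = -((ν+1)/2) by ring]
    ring
  have key := integral_Ioi_of_hasDerivAt_of_tendsto
    ((hder 0).continuousAt.continuousWithinAt) (fun x _ => hder x) hint htend
  have hF0 : F 0 = -(2*(ν/(ν-1))) * (1 + a^2/ν) ^ (-(ν-1)/2) := by
    simp only [hF]
    rw [show ((0:ℝ)-a)^2 = a^2 by ring]
  rw [key, hF0]
  ring

lemma integ_g {ν a : ℝ} (hν : 1 < ν) :
    Integrable (fun x : ℝ => (1 + (x-a)^2/ν) ^ (-(ν+1)/2)) := by
  have h := integ_main' (ν := ν) (a := a) (s := (ν+1)/2) (by linarith) (by linarith)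
  refine h.congr ?_
  refine ae_of_all _ fun x => ?_
  rw [show (-((ν+1)/2) : ℝ) = -(ν+1)/2 by ring]

lemma integ_xg {ν a : ℝ} (hν : 1 < ν) :
    Integrable (fun x : ℝ => (x-a) * (1 + (x-a)^2/ν) ^ (-(ν+1)/2)) := by
  have h := integ_lin' (ν := ν) (a := a) (s := (ν+1)/2) (by linarith) (by linarith)
  refine h.congr ?_
  refine ae_of_all _ fun x => ?_
  rw [show (-((ν+1)/2) : ℝ) = -(ν+1)/2 by ring]

lemma pos_2x {ν : ℝ} (hν : 1 < ν) (a : ℝ) :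
    0 < ∫ x in Ioi (0:ℝ), 2*x*(1 + (x-a)^2/ν) ^ (-(ν+1)/2) := by
  have hint : IntegrableOn (fun x : ℝ => 2*x*(1 + (x-a)^2/ν) ^ (-(ν+1)/2)) (Ioi 0) := by
    have h1 := ((integ_xg (a := a) hν).const_mul 2).add ((integ_g (a := a) hν).const_mul (2*a))
    refine (h1.congr (ae_of_all _ fun x => by simp only [Pi.add_apply]; ring)).integrableOn
  have hnn : 0 ≤ᵐ[volume.restrict (Ioi (0:ℝ))]
      fun x => 2*x*(1 + (x-a)^2/ν) ^ (-(ν+1)/2) := by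
    rw [EventuallyLE, ae_restrict_iff' measurableSet_Ioi]
    refine ae_of_all _ fun x hx => ?_
    have hb : (0:ℝ) < 1 + (x-a)^2/ν := by positivity
    have hx0 : (0:ℝ) < x := hx
    have := Real.rpow_pos_of_pos hb (-(ν+1)/2)
    simp only [Pi.zero_apply]
    positivity
  rw [setIntegral_pos_iff_support_of_nonneg_ae hnn hint]
  refine lt_of_lt_of_le ?_ (measure_mono (?_ : Ioo (0:ℝ) 1 ⊆ _))
  · simp
  · intro x hx
    constructor
    · have hb : (0:ℝ) < 1 + (x-a)^2/ν := by positivity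
      have h2 := Real.rpow_pos_of_pos hb (-(ν+1)/2)
      have hx0 : (0:ℝ) < x := hx.1
      simp only [Function.mem_support]
      positivity
    · exact hx.1

lemma lt_T {ν : ℝ} (hν : 1 < ν) (a : ℝ) :
    ∫ x in Ioi (0:ℝ), (-2*a)*(1 + (x-a)^2/ν) ^ (-(ν+1)/2)
      < ∫ x in Ioi (0:ℝ), 2*(x-a)*(1 + (x-a)^2/ν) ^ (-(ν+1)/2) := by
  rw [← sub_pos, ← integral_sub]
  · have : ∀ x ∈ Ioi (0:ℝ), 2*(x-a)*(1 + (x-a)^2/ν) ^ (-(ν+1)/2)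
        - (-2*a)*(1 + (x-a)^2/ν) ^ (-(ν+1)/2) = 2*x*(1 + (x-a)^2/ν) ^ (-(ν+1)/2) := by
      intro x _; ring
    rw [setIntegral_congr_fun measurableSet_Ioi this]
    exact pos_2x hν a
  · have := ((integ_xg (a := a) hν).const_mul 2)
    exact (this.congr (ae_of_all _ fun x => by ring)).integrableOn
  · exact ((integ_g (a := a) hν).const_mul (-2*a)).integrableOn

theorem stmt_16 (ν μ : ℝ) (hν : 1 < ν)
    (P : ℝ) (hP : P = ∫ x in Ioi (0:ℝ), C ν * (1 + (x - μ)^2 / ν) ^ (-(ν + 1) / 2)) :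
    |μ| < μ * (2 * P - 1) + 2 * C ν * (ν / (ν - 1)) * (1 + μ^2 / ν) ^ (-(ν - 1) / 2) := by
  have hν0 : (0:ℝ) < ν := by linarith
  have hG1 : 0 < Real.Gamma ((ν+1)/2) := Real.Gamma_pos_of_pos (by linarith)
  have hG2 : 0 < Real.Gamma (ν/2) := Real.Gamma_pos_of_pos (by linarith)
  have hsπν : 0 < Real.sqrt (π * ν) := Real.sqrt_pos.mpr (by positivity)
  have hC : 0 < C ν := by rw [C]; positivity
  have hP2 : P = C ν * ∫ x in Ioi (0:ℝ), (1 + (x - μ)^2 / ν) ^ (-(ν + 1) / 2) := by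
    rw [hP, MeasureTheory.integral_const_mul]
  rcases le_or_gt μ 0 with hμ | hμ
  · -- μ ≤ 0
    rw [abs_of_nonpos hμ]
    have h1 := lt_T hν μ
    rw [T_eq hν μ, MeasureTheory.integral_const_mul] at h1
    have h3 := mul_lt_mul_of_pos_left h1 hC
    nlinarith [h3]
  · -- μ > 0
    rw [abs_of_pos hμ]
    have htot : ∫ x : ℝ, C ν * (1 + (x - μ)^2 / ν) ^ (-(ν + 1) / 2) = 1 := by
      rw [MeasureTheory.integral_const_mul]
      have e1 : ∫ x : ℝ, (1 + (x-μ)^2/ν) ^ (-(ν+1)/2)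
          = ∫ x : ℝ, (1 + x^2/ν) ^ (-(ν+1)/2) :=
        MeasureTheory.integral_sub_right_eq_self (fun x : ℝ => (1 + x^2/ν) ^ (-(ν+1)/2)) μ
      have e2 : ∫ x : ℝ, (1 + x^2/ν) ^ (-(ν+1)/2)
          = Real.sqrt ν * (Real.sqrt π * Real.Gamma (ν/2) / Real.Gamma ((ν+1)/2)) := by
        have := norm_nu (ν := ν) (s := (ν+1)/2) hν0 (by linarith)
        rw [show ((ν+1)/2 - 1/2 : ℝ) = ν/2 by ring] at this
        rw [← this]
        congr 1
        funext x
        rw [show (-((ν+1)/2) : ℝ) = -(ν+1)/2 by ring]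
      rw [e1, e2, C, Real.sqrt_mul pi_pos.le]
      have h1 : Real.sqrt π ≠ 0 := by positivity
      have h2 : Real.sqrt ν ≠ 0 := by positivity
      field_simp
    have hIic : IntegrableOn (fun x : ℝ => C ν * (1 + (x - μ)^2 / ν) ^ (-(ν + 1) / 2)) (Iic 0) :=
      ((integ_g (a := μ) hν).const_mul _).integrableOn
    have hIoi : IntegrableOn (fun x : ℝ => C ν * (1 + (x - μ)^2 / ν) ^ (-(ν + 1) / 2)) (Ioi 0) :=
      ((integ_g (a := μ) hν).const_mul _).integrableOn
    have hsplit := intervalIntegral.integral_Iic_add_Ioi hIic hIoi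
    rw [htot, ← hP] at hsplit
    -- hsplit : ∫_{Iic 0} Cν g μ + P = 1
    have hflip : ∫ x in Iic (0:ℝ), C ν * (1 + (x - μ)^2 / ν) ^ (-(ν + 1) / 2)
        = C ν * ∫ x in Ioi (0:ℝ), (1 + (x - (-μ))^2 / ν) ^ (-(ν + 1) / 2) := by
      have hcn := integral_comp_neg_Iic (0:ℝ)
        (fun x => C ν * (1 + (x - (-μ))^2 / ν) ^ (-(ν + 1) / 2))
      rw [neg_zero] at hcn
      rw [← MeasureTheory.integral_const_mul, ← hcn]
      refine setIntegral_congr_fun measurableSet_Iic fun x _ => ?_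
      rw [show (-x - -μ)^2 = (x-μ)^2 by ring]
    have h1 := lt_T hν (-μ)
    rw [T_eq hν (-μ), MeasureTheory.integral_const_mul] at h1
    have h3 := mul_lt_mul_of_pos_left h1 hC
    rw [show ((-μ)^2 : ℝ) = μ^2 by ring] at h3
    set I' := ∫ x in Ioi (0:ℝ), (1 + (x - -μ)^2/ν) ^ (-(ν+1)/2) with hI'
    have hA : C ν * I' = 1 - P := by rw [← hflip]; linarith [hsplit]
    have h4 : C ν * (-2 * -μ * I') = 2*μ*(C ν * I') := by ring
    rw [h4, hA] at h3
    nlinarith [h3]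
end

section
/- For ν > 2, the variance of the folded standard Student t variate is positive: ν/(ν−2) − (4ν/(π(ν−1)²))·(Γ((ν+1)/2)/Γ(ν/2))² > 0. -/
open Real

lemma gamma_half_le (x : ℝ) (hx : 0 < x) :
    Real.Gamma (x + 1/2) ≤ Real.sqrt x * Real.Gamma x := by
  have hG := Real.convexOn_log_Gamma
  have h := hG.2 (Set.mem_Ioi.mpr hx) (Set.mem_Ioi.mpr (by linarith : (0:ℝ) < x + 1))
      (by norm_num : (0:ℝ) ≤ 1/2) (by norm_num : (0:ℝ) ≤ 1/2) (by norm_num)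
  simp only [Function.comp_apply, smul_eq_mul] at h
  rw [show (1/2:ℝ) * x + 1/2 * (x + 1) = x + 1/2 by ring] at h
  have hG1 : Real.Gamma (x + 1) = x * Real.Gamma x := Real.Gamma_add_one hx.ne'
  have hGpos : 0 < Real.Gamma x := Real.Gamma_pos_of_pos hx
  have hG1pos : 0 < Real.Gamma (x + 1) := Real.Gamma_pos_of_pos (by linarith)
  have hGhpos : 0 < Real.Gamma (x + 1/2) := Real.Gamma_pos_of_pos (by linarith)
  have hlog : Real.log (Real.Gamma (x + 1)) = Real.log x + Real.log (Real.Gamma x) := by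
    rw [hG1, Real.log_mul hx.ne' hGpos.ne']
  rw [hlog] at h
  have : Real.log (Real.Gamma (x + 1/2)) ≤ Real.log (Real.sqrt x * Real.Gamma x) := by
    rw [Real.log_mul (Real.sqrt_pos.mpr hx).ne' hGpos.ne', Real.log_sqrt hx.le]
    linarith
  have := Real.exp_le_exp.mpr this
  rwa [Real.exp_log hGhpos, Real.exp_log (by positivity)] at this

theorem stmt_17 (ν : ℝ) (hν : 2 < ν) :
    0 < ν / (ν - 2) - (4 * ν / (π * (ν - 1)^2)) * (Real.Gamma ((ν + 1) / 2) / Real.Gamma (ν / 2))^2 := by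
  have hx : 0 < ν / 2 := by linarith
  have key := gamma_half_le (ν / 2) hx
  have heq : ν / 2 + 1/2 = (ν + 1) / 2 := by ring
  rw [heq] at key
  have hGpos : 0 < Real.Gamma (ν / 2) := Real.Gamma_pos_of_pos hx
  have hGhpos : 0 < Real.Gamma ((ν + 1) / 2) := Real.Gamma_pos_of_pos (by linarith)
  have hratio : (Real.Gamma ((ν + 1) / 2) / Real.Gamma (ν / 2))^2 ≤ ν / 2 := by
    have h1 : Real.Gamma ((ν + 1) / 2) / Real.Gamma (ν / 2) ≤ Real.sqrt (ν / 2) := by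
      rw [div_le_iff₀ hGpos]; exact key
    have h2 : (0:ℝ) ≤ Real.Gamma ((ν + 1) / 2) / Real.Gamma (ν / 2) := by positivity
    calc (Real.Gamma ((ν + 1) / 2) / Real.Gamma (ν / 2))^2
        ≤ (Real.sqrt (ν / 2))^2 := by apply pow_le_pow_left₀ h2 h1
      _ = ν / 2 := Real.sq_sqrt hx.le
  have hπ : (2:ℝ) < π := by linarith [Real.pi_gt_three]
  have hν1 : (0:ℝ) < (ν - 1)^2 := by nlinarith
  have hcoef : 0 < 4 * ν / (π * (ν - 1)^2) := div_pos (by linarith) (mul_pos Real.pi_pos hν1)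
  have hbound : (4 * ν / (π * (ν - 1)^2)) * (Real.Gamma ((ν + 1) / 2) / Real.Gamma (ν / 2))^2
      ≤ (4 * ν / (π * (ν - 1)^2)) * (ν / 2) := by
    exact mul_le_mul_of_nonneg_left hratio hcoef.le
  have hfinal : (4 * ν / (π * (ν - 1)^2)) * (ν / 2) < ν / (ν - 2) := by
    rw [div_mul_eq_mul_div, div_lt_div_iff₀ (by positivity) (by linarith)]
    have : 2 * (ν * (ν - 2)) < π * (ν - 1)^2 := by nlinarith
    nlinarith
  linarith
end
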